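/- Let f be an expanding map generating a full shift with distortion constant K. For any m, probability vector p̄, ε > 0, and any 0 ≤ s < dim_H(G^{f,m}_{p̄}), one has liminf_{n→∞} N^s_∞([0,1) ∩ G^{f,m}_{p̄}(n,ε)) ≥ 1/K^s. -/

import Mathlib

open Set MeasureTheory Filter
open scoped ENNReal Classical

noncomputable section

/-- A similarity transformation of `ℝ`. -/
def IsSimilarity (f : ℝ → ℝ) : Prop := ∃ a b : ℝ, a ≠ 0 ∧ ∀ x, f x = a * x + b

/-- Falconer's class `𝒢^s`: Gδ sets all of whose images under countably many
similarities intersect in a set of Hausdorff dimension at least `s`. -/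
def falconerClass (s : ℝ) : Set (Set ℝ) :=
  {F | IsGδ F ∧ ∀ T : ℕ → ℝ → ℝ, (∀ i, IsSimilarity (T i)) →
    ENNReal.ofReal s ≤ dimH (⋂ i, T i '' F)}

/-- A probability vector indexed by a finite type. -/
def IsProbVector {ι : Type*} [Fintype ι] (p : ι → ℝ) : Prop :=
  (∀ i, 0 ≤ p i) ∧ ∑ i, p i = 1

/-- A dyadic half-open interval `[2^k m, 2^k (m+1))`. -/
def IsDyadic (I : Set ℝ) : Prop :=
  ∃ (k m : ℤ), I = Ico ((2:ℝ) ^ k * m) ((2:ℝ) ^ k * (m + 1))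

/-- The outer measure `M^s_∞` obtained from countable covers by dyadic intervals. -/
def dyadicMeasure (s : ℝ) (A : Set ℝ) : ℝ≥0∞ :=
  ⨅ (I : ℕ → Set ℝ) (_ : ∀ i, IsDyadic (I i)) (_ : A ⊆ ⋃ i, I i),
    ∑' i, volume (I i) ^ s

/-- Extension of a subset of `[0,1)` to `ℝ` by integer translations. -/
def periodize (A : Set ℝ) : Set ℝ := ⋃ k : ℤ, (fun x => x + (k : ℝ)) '' A

/-- An expanding interval map on `[0,1)` with `g` full monotone branches,
generating a full shift on `g` symbols. -/
structure ExpandingFullShift where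
  g : ℕ
  one_lt_g : 1 < g
  branch : Fin g → Set ℝ
  branch_Ico : ∀ i, ∃ a b : ℝ, a < b ∧ branch i = Ico a b
  branch_cover : (⋃ i, branch i) = Ico (0:ℝ) 1
  branch_disjoint : ∀ i j, i ≠ j → Disjoint (branch i) (branch j)
  f : ℝ → ℝ
  f_onto : ∀ i, f '' branch i = Ico (0:ℝ) 1
  f_mono : ∀ i, StrictMonoOn f (branch i) ∨ StrictAntiOn f (branch i)
  f_expanding : ∀ i, ∀ x ∈ branch i, ∀ y ∈ branch i, |x - y| ≤ |f x - f y|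

namespace ExpandingFullShift

variable (E : ExpandingFullShift)

/-- The symbol `0`. -/
def zeroSym : Fin E.g := ⟨0, Nat.lt_trans Nat.one_pos E.one_lt_g⟩

/-- The cylinder `C_{x₁ … x_n} ⊆ [0,1)` determined by a word `w`. -/
def cylinder (w : List (Fin E.g)) : Set ℝ :=
  {x ∈ Ico (0:ℝ) 1 | ∀ k (hk : k < w.length), E.f^[k] x ∈ E.branch (w.get ⟨k, hk⟩)}

/-- A cylinder in some interval `[k, k+1)`, `k ∈ ℤ` (periodic extension of the
cylinder structure to `ℝ`). -/
def IsCylinderZ (C : Set ℝ) : Prop :=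
  ∃ (w : List (Fin E.g)) (k : ℤ), C = (fun x => x + (k : ℝ)) '' E.cylinder w

/-- The outer measure `N^s_∞` obtained from countable covers by cylinders of `E`. -/
def cylMeasure (s : ℝ) (A : Set ℝ) : ℝ≥0∞ :=
  ⨅ (c : ℕ → List (Fin E.g)) (_ : A ⊆ ⋃ i, E.cylinder (c i)),
    ∑' i, volume (E.cylinder (c i)) ^ s

/-- The outer measure `N^s_∞` from covers by cylinders of the periodic extension. -/
def cylMeasureZ (s : ℝ) (A : Set ℝ) : ℝ≥0∞ :=
  ⨅ (c : ℕ → Set ℝ) (_ : ∀ i, E.IsCylinderZ (c i)) (_ : A ⊆ ⋃ i, c i),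
    ∑' i, volume (c i) ^ s

/-- The empirical frequency `τ^f_w(x,n)/(n-m)` of the word `w` (of length `m`)
in the first `n` symbols of the expansion of `x`. -/
def freq {m : ℕ} (w : Fin m → Fin E.g) (x : ℝ) (n : ℕ) : ℝ :=
  (((Finset.range (n - m)).filter
      (fun i => ∀ k : Fin m, E.f^[i + k] x ∈ E.branch (w k))).card : ℝ) / ((n - m : ℕ) : ℝ)

/-- `G^{f,m}_{p̄}`: the set of points whose length-`m` word frequencies converge to `p̄`. -/
def Gset (m : ℕ) (p : (Fin m → Fin E.g) → ℝ) : Set ℝ :=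
  {x ∈ Ico (0:ℝ) 1 | ∀ w : Fin m → Fin E.g,
    Tendsto (fun n => E.freq w x n) atTop (nhds (p w))}

/-- `G^{f,m}_{p̄}(n,ε)`: points whose empirical length-`m` word frequencies at time `n`
are within `ε` of `p̄` componentwise. -/
def GsetApprox (m : ℕ) (p : (Fin m → Fin E.g) → ℝ) (n : ℕ) (ε : ℝ) : Set ℝ :=
  {x ∈ Ico (0:ℝ) 1 | ∀ w : Fin m → Fin E.g, |E.freq w x n - p w| < ε}

/-- `p̄ ∈ A^{f,m}(x)`: the vector `p̄` is an accumulation point of the empirical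
frequency vectors of `x` as `n → ∞`. -/
def IsFreqAccum (m : ℕ) (p : (Fin m → Fin E.g) → ℝ) (x : ℝ) : Prop :=
  MapClusterPt p atTop (fun n => fun w => E.freq w x n)

/-- `x` is `m`-normal to `f`: every length-`m` word occurs with frequency equal to
the length of the corresponding cylinder. -/
def IsNormal (m : ℕ) (x : ℝ) : Prop :=
  ∀ w : Fin m → Fin E.g,
    Tendsto (fun n => E.freq w x n) atTop (nhds (volume (E.cylinder (List.ofFn w))).toReal)

/-- Bounded distortion with constant `K`:
`|C_u||C_v|/K ≤ |C_{uv}| ≤ K |C_u||C_v|` for all words `u, v`. -/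
def HasBoundedDistortion (K : ℝ) : Prop :=
  ∀ u v : List (Fin E.g),
    volume (E.cylinder (u ++ v)) ≤
      ENNReal.ofReal K * (volume (E.cylinder u) * volume (E.cylinder v)) ∧
    volume (E.cylinder u) * volume (E.cylinder v) ≤
      ENNReal.ofReal K * volume (E.cylinder (u ++ v))

/-- Condition (ii): for each `m` there is `p̄` with `dim_H G^{f,m}_{p̄} = 1`, and for
each word `w` of length `m` there are vectors `q̄` with `q_w ≠ p_w` whose `G`-set has
Hausdorff dimension arbitrarily close to `1`. -/
def CondII : Prop :=
  ∀ m : ℕ, 0 < m → ∃ p : (Fin m → Fin E.g) → ℝ, IsProbVector p ∧ dimH (E.Gset m p) = 1 ∧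
    ∀ w : Fin m → Fin E.g, ∀ t : ℝ≥0∞, t < 1 → ∃ q : (Fin m → Fin E.g) → ℝ,
      IsProbVector q ∧ q w ≠ p w ∧ t ≤ dimH (E.Gset m q)

end ExpandingFullShift

/-!
If the liminf were below some `t < K⁻ˢ`, then for every `N` and every shift `L` the set `A_N` of
points whose length-`m` frequencies stay `ε/2`-close to `p̄` from time `N` on is mapped by `f^L`
into some `G(n, ε)` of cylinder cost `< t`, since shifting by `L` perturbs frequencies by
`O(L/n)`. Prefixing each word `u` of a cover of `A_N` to such a cover of `f^|u|(A_N)` and using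
bounded distortion gives covers of `A_N` of cost `(Kˢ t)ʲ t → 0`. Cylinders are intervals, so their
diameters are at most their lengths; hence `μH[s] A_N = 0`, so `μH[s] G = 0` and `dim_H G ≤ s`.
-/

lemma Set.OrdConnected.ediam_le_volume {S : Set ℝ} (hS : S.OrdConnected) :
    Metric.ediam S ≤ volume S :=
  Metric.ediam_le fun x hx y hy => by
    rw [edist_dist, Real.dist_eq, ← Real.volume_interval]
    exact measure_mono (hS.uIcc_subset hy hx)

open Finset in
lemma card_filter_range_add (Q : ℕ → Prop) [DecidablePred Q] (L d : ℕ) :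
    #{j ∈ range (L + d) | Q j} = #{j ∈ range L | Q j} + #{i ∈ range d | Q (L + i)} := by
  rw [range_add, filter_union, card_union_of_disjoint (disjoint_filter_filter
    (disjoint_range_addLeftEmbedding L (range d))), filter_map, card_map]
  rfl

lemma abs_div_sub_add_div_add_le {a c d L : ℝ} (hd : 0 < d) (ha : 0 ≤ a) (had : a ≤ d)
    (hc : 0 ≤ c) (hcL : c ≤ L) :
    |a / d - (c + a) / (L + d)| ≤ L / d := by
  have hLd : 0 < L + d := by linarith
  rw [abs_le, div_sub_div _ _ hd.ne' hLd.ne', le_div_iff₀ (by positivity),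
    div_le_div_iff₀ (by positivity) hd]
  constructor
  · field_simp
    nlinarith [mul_nonneg ha hc, mul_nonneg hc hd.le, mul_nonneg ha (hc.trans hcL)]
  · have hL : 0 ≤ L := hc.trans hcL
    nlinarith [mul_nonneg (mul_nonneg (sub_nonneg.2 had) hL) hd.le,
      mul_nonneg (mul_nonneg hc hd.le) hd.le, mul_nonneg (mul_nonneg hL hL) hd.le]

namespace ExpandingFullShift

variable (E : ExpandingFullShift)

lemma branch_subset_Ico (i : Fin E.g) : E.branch i ⊆ Ico 0 1 :=
  E.branch_cover ▸ subset_iUnion E.branch i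

lemma mapsTo_f : MapsTo E.f (Ico 0 1) (Ico 0 1) := by
  intro x hx
  rw [← E.branch_cover] at hx
  obtain ⟨i, hi⟩ := mem_iUnion.mp hx
  exact E.f_onto i ▸ mem_image_of_mem E.f hi

lemma mem_cylinder_iff {w : List (Fin E.g)} {x : ℝ} :
    x ∈ E.cylinder w ↔ x ∈ Ico 0 1 ∧ ∀ k (hk : k < w.length), E.f^[k] x ∈ E.branch w[k] :=
  Iff.rfl

lemma cylinder_nil : E.cylinder [] = Ico 0 1 := by
  ext x
  simp [mem_cylinder_iff]

lemma cylinder_append (u v : List (Fin E.g)) :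
    E.cylinder (u ++ v) = E.cylinder u ∩ E.f^[u.length] ⁻¹' E.cylinder v := by
  ext x
  simp only [mem_cylinder_iff, mem_inter_iff, mem_preimage, List.length_append]
  constructor
  · rintro ⟨hx, h⟩
    refine ⟨⟨hx, fun k hk => ?_⟩, (E.mapsTo_f.iterate _) hx, fun k hk => ?_⟩
    · simpa [List.getElem_append_left hk] using h k (by omega)
    · simpa [← Function.iterate_add_apply, add_comm k] using h (u.length + k) (by omega)
  · rintro ⟨⟨hx, hu⟩, -, hv⟩
    refine ⟨hx, fun k hk => ?_⟩
    rcases lt_or_ge k u.length with h | h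
    · simpa [List.getElem_append_left h] using hu k h
    · simpa [List.getElem_append_right h, ← Function.iterate_add_apply, Nat.sub_add_cancel h]
        using hv (k - u.length) (by omega)

lemma cylinder_cons (a : Fin E.g) (w : List (Fin E.g)) :
    E.cylinder (a :: w) = E.branch a ∩ E.f ⁻¹' E.cylinder w := by
  have hsingle : E.cylinder [a] = E.branch a := by
    ext x
    simpa [mem_cylinder_iff] using fun hx => E.branch_subset_Ico a hx
  rw [← List.singleton_append, cylinder_append, hsingle, List.length_singleton,
    Function.iterate_one]

lemma ordConnected_cylinder (w : List (Fin E.g)) : (E.cylinder w).OrdConnected := by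
  induction w with
  | nil => exact E.cylinder_nil ▸ ordConnected_Ico
  | cons a w ih =>
    obtain ⟨c, d, -, hcd⟩ := E.branch_Ico a
    have hbranch : (E.branch a).OrdConnected := hcd ▸ ordConnected_Ico
    rw [cylinder_cons]
    obtain ⟨u, hu, heq⟩ := (E.f_mono a).elim (fun h => ih.preimage_monotoneOn h.monotoneOn)
      (fun h => ih.preimage_antitoneOn h.antitoneOn)
    exact heq ▸ hbranch.inter hu

open Finset in
lemma abs_freq_iterate_sub_freq_le {m : ℕ} (w : Fin m → Fin E.g) (x : ℝ) (L : ℕ) {n : ℕ}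
    (hn : m < n) :
    |E.freq w (E.f^[L] x) n - E.freq w x (n + L)| ≤ L / (n - m : ℕ) := by
  set Q : ℕ → Prop := fun j => ∀ k : Fin m, E.f^[j + k] x ∈ E.branch (w k)
  have hshift : {i ∈ range (n - m) | ∀ k : Fin m, E.f^[i + k] (E.f^[L] x) ∈ E.branch (w k)} =
      {i ∈ range (n - m) | Q (L + i)} := by
    refine filter_congr fun i _ => forall_congr' fun k => ?_
    rw [← Function.iterate_add_apply, add_right_comm, add_comm i L]
  rw [freq, freq, hshift, show n + L - m = L + (n - m) by omega, card_filter_range_add Q]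
  push_cast
  refine abs_div_sub_add_div_add_le (Nat.cast_pos.2 (by omega)) (Nat.cast_nonneg _) ?_
    (Nat.cast_nonneg _) ?_ <;> norm_cast
  · exact (card_filter_le _ _).trans (card_range _).le
  · exact (card_filter_le _ _).trans (card_range _).le

lemma mapsTo_iterate_iInter_GsetApprox {m : ℕ} (p : (Fin m → Fin E.g) → ℝ) {ε : ℝ} (hε : 0 < ε)
    {N n L : ℕ} (hN : N ≤ n) (hn : m + 2 * L / ε < n) :
    MapsTo E.f^[L] (⋂ n' ≥ N, E.GsetApprox m p n' (ε / 2)) (E.GsetApprox m p n ε) := by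
  intro x hx
  simp only [mem_iInter] at hx
  have hm : m < n := by exact_mod_cast (le_add_of_nonneg_right (by positivity)).trans_lt hn
  have herr : (L : ℝ) / (n - m : ℕ) ≤ ε / 2 := by
    have hn' : 2 * L / ε < (n - m : ℕ) := by push_cast [hm.le]; linarith
    rw [div_lt_iff₀ hε] at hn'
    rw [div_le_iff₀ (Nat.cast_pos.2 (by omega))]
    linarith
  refine ⟨E.mapsTo_f.iterate L (hx N le_rfl).1, fun w => ?_⟩
  calc |E.freq w (E.f^[L] x) n - p w|
      ≤ |E.freq w (E.f^[L] x) n - E.freq w x (n + L)| + |E.freq w x (n + L) - p w| :=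
        abs_sub_le _ _ _
    _ < ε / 2 + ε / 2 := add_lt_add_of_le_of_lt
        ((E.abs_freq_iterate_sub_freq_le w x L hm).trans herr) ((hx (n + L) (by omega)).2 w)
    _ = ε := add_halves ε

lemma Gset_subset_iUnion_iInter_GsetApprox {m : ℕ} (p : (Fin m → Fin E.g) → ℝ) {δ : ℝ}
    (hδ : 0 < δ) : E.Gset m p ⊆ ⋃ N, ⋂ n ≥ N, E.GsetApprox m p n δ := by
  rintro x ⟨hx, hfreq⟩
  have hclose : ∀ᶠ n in atTop, ∀ w, |E.freq w x n - p w| < δ :=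
    eventually_all.2 fun w => by
      simpa only [Real.dist_eq] using Metric.tendsto_nhds.1 (hfreq w) δ hδ
  obtain ⟨N, hN⟩ := eventually_atTop.1 hclose
  exact mem_iUnion.2 ⟨N, mem_iInter₂.2 fun n hn => ⟨hx, hN n hn⟩⟩

lemma Ico_inter_GsetApprox (m : ℕ) (p : (Fin m → Fin E.g) → ℝ) (n : ℕ) (ε : ℝ) :
    Ico 0 1 ∩ E.GsetApprox m p n ε = E.GsetApprox m p n ε :=
  inter_eq_right.2 fun _ hx => hx.1

-- Covers are indexed by `ℕ` and `0 ^ 0 = 1`, so every cover costs `⊤`.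
lemma cylMeasure_zero (A : Set ℝ) : E.cylMeasure 0 A = ⊤ := by
  simp [cylMeasure]

lemma cylMeasure_le {s : ℝ} {A : Set ℝ} (c : ℕ → List (Fin E.g))
    (hc : A ⊆ ⋃ i, E.cylinder (c i)) :
    E.cylMeasure s A ≤ ∑' i, volume (E.cylinder (c i)) ^ s :=
  iInf₂_le c hc

lemma exists_cover_of_cylMeasure_lt {s : ℝ} {A : Set ℝ} {t : ℝ≥0∞} (h : E.cylMeasure s A < t) :
    ∃ c : ℕ → List (Fin E.g),
      A ⊆ ⋃ i, E.cylinder (c i) ∧ ∑' i, volume (E.cylinder (c i)) ^ s < t := by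
  simpa only [cylMeasure, iInf_lt_iff, exists_prop] using h

lemma hausdorffMeasure_eq_zero_of_cylMeasure_eq_zero {s : ℝ} (hs : 0 < s) {A : Set ℝ}
    (h : E.cylMeasure s A = 0) : μH[s] A = 0 := by
  have hsmall : ∀ j : ℕ, E.cylMeasure s A < 2⁻¹ ^ j :=
    fun j => h ▸ ENNReal.pow_pos (by norm_num) j
  choose c hcA hcost using fun j => E.exists_cover_of_cylMeasure_lt (hsmall j)
  have hvol : ∀ j i, volume (E.cylinder (c j i)) ≤ ((2⁻¹ : ℝ≥0∞) ^ j) ^ s⁻¹ := fun j i =>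
    (ENNReal.le_rpow_inv_iff hs).2 ((ENNReal.le_tsum i).trans (hcost j).le)
  have hgeom : Tendsto (fun j : ℕ => (2⁻¹ : ℝ≥0∞) ^ j) atTop (nhds 0) :=
    ENNReal.tendsto_pow_atTop_nhds_zero_of_lt_one (by norm_num)
  have hr : Tendsto (fun j : ℕ => ((2⁻¹ : ℝ≥0∞) ^ j) ^ s⁻¹) atTop (nhds 0) := by
    simpa only [Function.comp_def, ENNReal.zero_rpow_of_pos (inv_pos.2 hs)] using
      ((ENNReal.continuous_rpow_const (y := s⁻¹)).tendsto 0).comp hgeom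
  have hdiam : ∀ j i, Metric.ediam (E.cylinder (c j i)) ≤ volume (E.cylinder (c j i)) :=
    fun j i => (E.ordConnected_cylinder _).ediam_le_volume
  refine le_antisymm ?_ zero_le
  calc μH[s] A ≤ atTop.liminf (fun j => ∑' i, Metric.ediam (E.cylinder (c j i)) ^ s) :=
        Measure.hausdorffMeasure_le_liminf_tsum s A _ hr _
          (Eventually.of_forall fun j i => (hdiam j i).trans (hvol j i))
          (Eventually.of_forall hcA)
    _ ≤ atTop.liminf (fun j : ℕ => (2⁻¹ : ℝ≥0∞) ^ j) :=
        liminf_le_liminf (Eventually.of_forall fun j => (ENNReal.tsum_le_tsum fun i =>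
          ENNReal.rpow_le_rpow (hdiam j i) hs.le).trans (hcost j).le)
    _ = 0 := hgeom.liminf_eq

variable {E}

lemma HasBoundedDistortion.volume_cylinder_append_rpow_le {K s : ℝ}
    (hbd : E.HasBoundedDistortion K) (hK : 0 < K) (hs : 0 ≤ s) (u v : List (Fin E.g)) :
    volume (E.cylinder (u ++ v)) ^ s ≤
      ENNReal.ofReal (K ^ s) * (volume (E.cylinder u) ^ s * volume (E.cylinder v) ^ s) := by
  rw [← ENNReal.ofReal_rpow_of_pos hK, ← ENNReal.mul_rpow_of_nonneg _ _ hs,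
    ← ENNReal.mul_rpow_of_nonneg _ _ hs]
  exact ENNReal.rpow_le_rpow (hbd u v).1 hs

-- A cover of `A` by words `u` and covers of each `f^|u|(A)` concatenate to a cover of `A`
-- whose cost has gained a factor `κ t`.
lemma exists_cover_cost_le_pow {s : ℝ} {κ t : ℝ≥0∞}
    (hκ : ∀ u v : List (Fin E.g), volume (E.cylinder (u ++ v)) ^ s ≤
      κ * (volume (E.cylinder u) ^ s * volume (E.cylinder v) ^ s))
    {A : Set ℝ} {B : ℕ → Set ℝ} (hAB : ∀ L, MapsTo E.f^[L] A (B L))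
    (hB : ∀ L, E.cylMeasure s (B L) < t) (j : ℕ) :
    ∃ c : ℕ → List (Fin E.g),
      A ⊆ ⋃ i, E.cylinder (c i) ∧ ∑' i, volume (E.cylinder (c i)) ^ s ≤ (κ * t) ^ j * t := by
  choose cov hcov hcost using fun L => E.exists_cover_of_cylMeasure_lt (hB L)
  induction j with
  | zero => exact ⟨cov 0, fun x hx => hcov 0 (hAB 0 hx), by simpa using (hcost 0).le⟩
  | succ j ih =>
    obtain ⟨W, hWA, hWcost⟩ := ih
    let e : ℕ ≃ ℕ × ℕ := Nat.pairEquiv.symm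
    refine ⟨fun i => W (e i).1 ++ cov (W (e i).1).length (e i).2, fun x hx => ?_, ?_⟩
    · obtain ⟨i, hi⟩ := mem_iUnion.1 (hWA hx)
      obtain ⟨i', hi'⟩ := mem_iUnion.1 (hcov _ (hAB (W i).length hx))
      exact mem_iUnion.2 ⟨e.symm (i, i'), by simpa [cylinder_append] using ⟨hi, hi'⟩⟩
    calc ∑' i, volume (E.cylinder (W (e i).1 ++ cov (W (e i).1).length (e i).2)) ^ s
        = ∑' q : ℕ × ℕ, volume (E.cylinder (W q.1 ++ cov (W q.1).length q.2)) ^ s :=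
          e.tsum_eq fun q => volume (E.cylinder (W q.1 ++ cov (W q.1).length q.2)) ^ s
      _ ≤ ∑' q : ℕ × ℕ, κ * (volume (E.cylinder (W q.1)) ^ s *
            volume (E.cylinder (cov (W q.1).length q.2)) ^ s) :=
          ENNReal.tsum_le_tsum fun q => hκ _ _
      _ = κ * ∑' i, volume (E.cylinder (W i)) ^ s *
            ∑' i', volume (E.cylinder (cov (W i).length i')) ^ s := by
          rw [ENNReal.tsum_mul_left, ENNReal.tsum_prod']
          simp_rw [ENNReal.tsum_mul_left]
      _ ≤ κ * ∑' i, volume (E.cylinder (W i)) ^ s * t := by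
          gcongr with i
          exact (hcost _).le
      _ = κ * t * ∑' i, volume (E.cylinder (W i)) ^ s := by
          rw [ENNReal.tsum_mul_right]
          ring
      _ ≤ κ * t * ((κ * t) ^ j * t) := by gcongr
      _ = (κ * t) ^ (j + 1) * t := by ring

lemma cylMeasure_eq_zero_of_mapsTo_iterate {s : ℝ} {κ t : ℝ≥0∞}
    (hκ : ∀ u v : List (Fin E.g), volume (E.cylinder (u ++ v)) ^ s ≤
      κ * (volume (E.cylinder u) ^ s * volume (E.cylinder v) ^ s))
    {A : Set ℝ} {B : ℕ → Set ℝ} (hAB : ∀ L, MapsTo E.f^[L] A (B L))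
    (hB : ∀ L, E.cylMeasure s (B L) < t) (hκt : κ * t < 1) (ht : t ≠ ⊤) :
    E.cylMeasure s A = 0 := by
  have hgeom : Tendsto (fun j : ℕ => (κ * t) ^ j * t) atTop (nhds 0) := by
    simpa using ENNReal.Tendsto.mul_const
      (ENNReal.tendsto_pow_atTop_nhds_zero_of_lt_one hκt) (Or.inr ht)
  refine le_antisymm (ge_of_tendsto' hgeom fun j => ?_) zero_le
  obtain ⟨c, hc, hcost⟩ := exists_cover_cost_le_pow hκ hAB hB j
  exact (E.cylMeasure_le c hc).trans hcost

lemma hausdorffMeasure_Gset_eq_zero {K s : ℝ} (hbd : E.HasBoundedDistortion K) (hK : 0 < K)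
    (hs : 0 < s) {m : ℕ} (p : (Fin m → Fin E.g) → ℝ) {ε : ℝ} (hε : 0 < ε) {t : ℝ≥0∞}
    (hKt : ENNReal.ofReal (K ^ s) * t < 1)
    (hfreq : ∃ᶠ n in atTop, E.cylMeasure s (E.GsetApprox m p n ε) < t) :
    μH[s] (E.Gset m p) = 0 := by
  have ht : t ≠ ⊤ := fun ht => hKt.ne_top (ENNReal.mul_eq_top.2
    (Or.inl ⟨(ENNReal.ofReal_pos.2 (Real.rpow_pos_of_pos hK s)).ne', ht⟩))
  refine measure_mono_null (E.Gset_subset_iUnion_iInter_GsetApprox p (half_pos hε))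
    (measure_iUnion_null fun N => ?_)
  have hn : ∀ L : ℕ, ∃ n, E.cylMeasure s (E.GsetApprox m p n ε) < t ∧ N ≤ n ∧
      (m : ℝ) + 2 * L / ε < n := fun L =>
    (hfreq.and_eventually ((eventually_ge_atTop N).and
      (tendsto_natCast_atTop_atTop.eventually_gt_atTop _))).exists
  choose n hn_lt hNn hmn using hn
  exact E.hausdorffMeasure_eq_zero_of_cylMeasure_eq_zero hs
    (cylMeasure_eq_zero_of_mapsTo_iterate (hbd.volume_cylinder_append_rpow_le hK hs.le)
      (fun L => E.mapsTo_iterate_iInter_GsetApprox p hε (hNn L) (hmn L)) hn_lt hKt ht)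

end ExpandingFullShift

open ExpandingFullShift in
theorem liminf_cylMeasure_unitInterval_general (E : ExpandingFullShift) (K : ℝ) (hK : 1 ≤ K)
    (hbd : E.HasBoundedDistortion K)
    (m : ℕ) (p : (Fin m → Fin E.g) → ℝ)
    (ε : ℝ) (hε : 0 < ε)
    (s : ℝ) (hs0 : 0 ≤ s) (hs : ENNReal.ofReal s < dimH (E.Gset m p)) :
    ENNReal.ofReal (1 / K ^ s)
      ≤ atTop.liminf (fun n => E.cylMeasure s (Ico (0:ℝ) 1 ∩ E.GsetApprox m p n ε)) := by
  rcases hs0.eq_or_lt with rfl | hs_pos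
  · simp [cylMeasure_zero]
  refine le_of_not_gt fun hlt => hs.not_ge ?_
  obtain ⟨t, hlt_t, ht⟩ := exists_between hlt
  have hK0 : 0 < K := one_pos.trans_le hK
  have hKs : 0 < K ^ s := Real.rpow_pos_of_pos hK0 s
  have hKt : ENNReal.ofReal (K ^ s) * t < 1 :=
    calc ENNReal.ofReal (K ^ s) * t < ENNReal.ofReal (K ^ s) * ENNReal.ofReal (1 / K ^ s) :=
          ENNReal.mul_lt_mul_right (ENNReal.ofReal_pos.2 hKs).ne' ENNReal.ofReal_ne_top ht
      _ = 1 := by rw [← ENNReal.ofReal_mul hKs.le, mul_one_div_cancel hKs.ne', ENNReal.ofReal_one]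
  have hfreq : ∃ᶠ n in atTop, E.cylMeasure s (E.GsetApprox m p n ε) < t := by
    simpa only [Ico_inter_GsetApprox] using
      frequently_lt_of_liminf_lt (by isBoundedDefault) hlt_t
  have hμ := E.hausdorffMeasure_Gset_eq_zero hbd hK0 hs_pos p hε hKt hfreq
  rw [← Real.coe_toNNReal s hs0] at hμ
  exact dimH_le_of_hausdorffMeasure_ne_top (hμ ▸ ENNReal.zero_ne_top)

open ExpandingFullShift in
/-- for `0 ≤ s < dim_H G^{f,m}_{p̄}`,
`liminf_n N^s_∞([0,1) ∩ G^{f,m}_{p̄}(n,ε)) ≥ 1/K^s`. -/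
theorem liminf_cylMeasure_unitInterval (E : ExpandingFullShift) (K : ℝ) (hK : 1 ≤ K)
    (hbd : E.HasBoundedDistortion K)
    (m : ℕ) (hm : 0 < m) (p : (Fin m → Fin E.g) → ℝ) (hp : IsProbVector p)
    (ε : ℝ) (hε : 0 < ε)
    (s : ℝ) (hs0 : 0 ≤ s) (hs : ENNReal.ofReal s < dimH (E.Gset m p)) :
    ENNReal.ofReal (1 / K ^ s)
      ≤ atTop.liminf (fun n => E.cylMeasure s (Ico (0:ℝ) 1 ∩ E.GsetApprox m p n ε)) :=
  liminf_cylMeasure_unitInterval_general E K hK hbd m p ε hε s hs0 hs
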